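/- For (e,f) ∈ Δ = {(e,f) : 0 < f < e < 1}, the billiard rotation number satisfies ρ̂(e,f) = 1/4 if and only if e² + f⁴ − 2f² = 0. In particular, for e ∈ (0,1) with e' = √(1−e²), one has the elliptic integral identity F(arcsin(1/√(1+e')), e) = K(e)/2. -/

import Mathlib

open Real

/-- Incomplete elliptic integral of the first kind `F(φ,e)`. -/
noncomputable def ellF (φ e : ℝ) : ℝ :=
  ∫ τ in (0:ℝ)..φ, 1 / Real.sqrt (1 - e ^ 2 * Real.sin τ ^ 2)

/-- Complete elliptic integral of the first kind `K(e)`. -/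
noncomputable def ellK (e : ℝ) : ℝ := ellF (Real.pi / 2) e

/-- The angle `ω̂(e,f)`. -/
noncomputable def omegaHat (e f : ℝ) : ℝ :=
  Real.arcsin (Real.sqrt ((e ^ 2 - f ^ 2) / (e ^ 2 * (1 - f ^ 2))))

/-- The billiard rotation number `ρ̂(e,f)`. -/
noncomputable def rhoHat (e f : ℝ) : ℝ := ellF (omegaHat e f) e / (2 * ellK e)

/-!
With `Δ(τ) = √(1 - e² sin² τ)` and `e' = √(1 - e²)`, the complementary amplitude
`ψ(τ) = arcsin (cos τ / Δ(τ))` satisfies `Δ(ψ(τ)) = e' / Δ(τ)` and `ψ'(τ) = -e' / Δ(τ)²`, so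
`F(ψ(τ)) + F(τ)` has derivative zero and equals its value `K` at `τ = 0`. The fixed point of `ψ`
is `φ₀ = arcsin (1 / √(1 + e'))`, whence `F(φ₀) = K / 2`. As `F` is strictly increasing,
`ρ̂ = 1/4` means `ω̂ = φ₀`, which after squaring the sines is the algebraic condition
`e² + f⁴ - 2 f² = 0`.
-/

noncomputable def ellDelta (e τ : ℝ) : ℝ := √(1 - e ^ 2 * sin τ ^ 2)

noncomputable def complAmplitude (e τ : ℝ) : ℝ := arcsin (cos τ / ellDelta e τ)

section

variable {e : ℝ}

lemma one_sub_sq_mul_sin_sq_pos (he : e ^ 2 < 1) (τ : ℝ) : 0 < 1 - e ^ 2 * sin τ ^ 2 := by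
  nlinarith [sin_sq_le_one τ, sq_nonneg e]

lemma ellDelta_pos (he : e ^ 2 < 1) (τ : ℝ) : 0 < ellDelta e τ :=
  sqrt_pos.2 (one_sub_sq_mul_sin_sq_pos he τ)

lemma sq_ellDelta (he : e ^ 2 < 1) (τ : ℝ) : ellDelta e τ ^ 2 = 1 - e ^ 2 * sin τ ^ 2 :=
  sq_sqrt (one_sub_sq_mul_sin_sq_pos he τ).le

lemma continuous_ellDelta : Continuous (ellDelta e) := by
  unfold ellDelta
  fun_prop

lemma hasDerivAt_ellF (he : e ^ 2 < 1) (φ : ℝ) :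
    HasDerivAt (ellF · e) (1 / ellDelta e φ) φ := by
  have hc : Continuous fun τ => 1 / ellDelta e τ :=
    continuous_const.div continuous_ellDelta fun τ => (ellDelta_pos he τ).ne'
  exact intervalIntegral.integral_hasDerivAt_right (hc.intervalIntegrable _ _)
    hc.aestronglyMeasurable.stronglyMeasurableAtFilter hc.continuousAt

lemma continuous_ellF (he : e ^ 2 < 1) : Continuous (ellF · e) :=
  continuous_iff_continuousAt.2 fun φ => (hasDerivAt_ellF he φ).continuousAt

lemma ellF_strictMono (he : e ^ 2 < 1) : StrictMono (ellF · e) :=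
  strictMono_of_deriv_pos fun φ => by
    rw [(hasDerivAt_ellF he φ).deriv]
    exact one_div_pos.2 (ellDelta_pos he φ)

lemma ellF_zero (e : ℝ) : ellF 0 e = 0 := intervalIntegral.integral_same

lemma ellK_pos (he : e ^ 2 < 1) : 0 < ellK e := by
  simpa [ellK, ellF_zero] using ellF_strictMono he (by positivity : (0 : ℝ) < π / 2)

lemma sq_cos_div_ellDelta_add_sq (he : e ^ 2 < 1) (τ : ℝ) :
    (cos τ / ellDelta e τ) ^ 2 + (√(1 - e ^ 2) * sin τ / ellDelta e τ) ^ 2 = 1 := by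
  have hΔ := sq_ellDelta he τ
  have hΔ0 := (ellDelta_pos he τ).ne'
  rw [div_pow, div_pow, mul_pow, sq_sqrt (by linarith), ← add_div,
    div_eq_one_iff_eq (pow_ne_zero 2 hΔ0)]
  linear_combination -hΔ + cos_sq_add_sin_sq τ

lemma abs_cos_div_ellDelta_le_one (he : e ^ 2 < 1) (τ : ℝ) : |cos τ / ellDelta e τ| ≤ 1 :=
  sq_le_one_iff_abs_le_one _ |>.1 <| by nlinarith [sq_cos_div_ellDelta_add_sq he τ]

lemma ellDelta_complAmplitude (he : e ^ 2 < 1) (τ : ℝ) :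
    ellDelta e (complAmplitude e τ) = √(1 - e ^ 2) / ellDelta e τ := by
  obtain ⟨hlo, hhi⟩ := abs_le.1 (abs_cos_div_ellDelta_le_one he τ)
  have hΔ := sq_ellDelta he τ
  have hΔ0 := (ellDelta_pos he τ).ne'
  have hsq : 1 - e ^ 2 * (cos τ / ellDelta e τ) ^ 2 = (√(1 - e ^ 2) / ellDelta e τ) ^ 2 := by
    rw [div_pow, div_pow, sq_sqrt (by linarith)]
    field_simp
    linear_combination hΔ - e ^ 2 * sin_sq_add_cos_sq τ
  rw [ellDelta, complAmplitude, sin_arcsin hlo hhi, hsq,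
    sqrt_sq (div_nonneg (sqrt_nonneg _) (ellDelta_pos he τ).le)]

lemma hasDerivAt_ellDelta (he : e ^ 2 < 1) (τ : ℝ) :
    HasDerivAt (ellDelta e) (-(e ^ 2 * sin τ * cos τ) / ellDelta e τ) τ := by
  refine ((((hasDerivAt_sin τ).pow 2).const_mul (e ^ 2)).const_sub 1 |>.sqrt
    (one_sub_sq_mul_sin_sq_pos he τ).ne').congr_deriv ?_
  simp only [ellDelta, Pi.pow_apply]
  field_simp
  ring

lemma hasDerivAt_complAmplitude (he : e ^ 2 < 1) {τ : ℝ} (hτ : 0 < sin τ) :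
    HasDerivAt (complAmplitude e) (-(√(1 - e ^ 2) / ellDelta e τ ^ 2)) τ := by
  have hΔ := sq_ellDelta he τ
  have hΔpos := ellDelta_pos he τ
  have he' : 0 < √(1 - e ^ 2) := sqrt_pos.2 (by linarith)
  have hpyth := sq_cos_div_ellDelta_add_sq he τ
  have hu := (hasDerivAt_cos τ).div (hasDerivAt_ellDelta he τ) hΔpos.ne'
  have hlt : (cos τ / ellDelta e τ) ^ 2 < 1 := by
    have : 0 < √(1 - e ^ 2) * sin τ / ellDelta e τ := by positivity
    nlinarith
  have hne1 : cos τ / ellDelta e τ ≠ 1 := fun h => by norm_num [h] at hlt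
  have hne1' : cos τ / ellDelta e τ ≠ -1 := fun h => by norm_num [h] at hlt
  refine ((hasDerivAt_arcsin hne1' hne1).comp τ hu).congr_deriv ?_
  rw [show 1 - (cos τ / ellDelta e τ) ^ 2 = (√(1 - e ^ 2) * sin τ / ellDelta e τ) ^ 2 by linarith,
    sqrt_sq (by positivity)]
  have he2 : √(1 - e ^ 2) ^ 2 = 1 - e ^ 2 := sq_sqrt (by linarith)
  field_simp
  linear_combination -hΔ + he2 + e ^ 2 * sin_sq_add_cos_sq τ

lemma continuous_complAmplitude (he : e ^ 2 < 1) : Continuous (complAmplitude e) :=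
  continuous_arcsin.comp (continuous_cos.div continuous_ellDelta fun τ => (ellDelta_pos he τ).ne')

lemma hasDerivAt_ellF_complAmplitude (he : e ^ 2 < 1) {τ : ℝ} (hτ : 0 < sin τ) :
    HasDerivAt (fun t => ellF (complAmplitude e t) e) (-(1 / ellDelta e τ)) τ := by
  refine ((hasDerivAt_ellF he _).comp τ (hasDerivAt_complAmplitude he hτ)).congr_deriv ?_
  have he' : 0 < √(1 - e ^ 2) := sqrt_pos.2 (by linarith)
  have hΔ := (ellDelta_pos he τ).ne'
  rw [ellDelta_complAmplitude he]
  field_simp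

lemma ellF_complAmplitude_add_ellF (he : e ^ 2 < 1) {τ : ℝ} (h0 : 0 ≤ τ) (hπ : τ ≤ π) :
    ellF (complAmplitude e τ) e + ellF τ e = ellK e := by
  set H := fun t => ellF (complAmplitude e t) e + ellF t e
  have hH0 : H 0 = ellK e := by
    simp [H, complAmplitude, ellDelta, ellF_zero, ellK]
  rcases h0.eq_or_lt with rfl | hpos
  · exact hH0
  have hH : Continuous H :=
    ((continuous_ellF he).comp (continuous_complAmplitude he)).add (continuous_ellF he)
  obtain ⟨c, -, hc⟩ := exists_hasDerivAt_eq_slope H (fun _ => 0) hpos hH.continuousOn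
    fun x hx => ((hasDerivAt_ellF_complAmplitude he
      (sin_pos_of_pos_of_lt_pi hx.1 (hx.2.trans_le hπ))).add (hasDerivAt_ellF he x)).congr_deriv
      (by ring)
  rw [eq_comm, div_eq_zero_iff, sub_eq_zero] at hc
  exact (hc.resolve_right (by linarith)).trans hH0

lemma complAmplitude_arcsin_one_div_sqrt (he : e ^ 2 < 1) :
    complAmplitude e (arcsin (1 / √(1 + √(1 - e ^ 2)))) = arcsin (1 / √(1 + √(1 - e ^ 2))) := by
  set e' := √(1 - e ^ 2)
  set s := 1 / √(1 + e')
  have he' : 0 < e' := sqrt_pos.2 (by linarith)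
  have he'2 : e' ^ 2 = 1 - e ^ 2 := sq_sqrt (by linarith)
  have hs0 : 0 < s := by positivity
  have hs2 : s ^ 2 = 1 / (1 + e') := by rw [div_pow, one_pow, sq_sqrt (by positivity)]
  have hs1 : s ≤ 1 := div_le_one_of_le₀ (one_le_sqrt.2 (by linarith)) (sqrt_nonneg _)
  have hden : 0 < 1 - e ^ 2 * s ^ 2 := by
    nlinarith [mul_le_mul hs1 hs1 hs0.le zero_le_one, sq_nonneg e]
  unfold complAmplitude
  congr 1
  rw [cos_arcsin, ellDelta, sin_arcsin (by linarith) hs1, ← sqrt_div (by nlinarith),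
    show (1 - s ^ 2) / (1 - e ^ 2 * s ^ 2) = s ^ 2 by
      rw [div_eq_iff hden.ne', hs2]
      field_simp
      linear_combination he'2,
    sqrt_sq hs0.le]

lemma ellF_arcsin_one_div_sqrt (he : e ^ 2 < 1) :
    ellF (arcsin (1 / √(1 + √(1 - e ^ 2)))) e = ellK e / 2 := by
  have h := ellF_complAmplitude_add_ellF he (τ := arcsin (1 / √(1 + √(1 - e ^ 2))))
    (arcsin_nonneg.2 (by positivity))
    ((arcsin_le_pi_div_two _).trans (by linarith [pi_pos]))
  rw [complAmplitude_arcsin_one_div_sqrt he] at h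
  linarith

lemma rhoHat_eq_one_fourth_iff (he : e ^ 2 < 1) (f : ℝ) :
    rhoHat e f = 1 / 4 ↔ ellF (omegaHat e f) e = ellK e / 2 := by
  rw [rhoHat, div_eq_iff (by linarith [ellK_pos he])]
  constructor <;> intro h <;> linarith

end

section

variable {e f : ℝ}

lemma sq_sub_sq_div_eq_inv_iff (hf : 0 < f) (hfe : f < e) (he : e < 1) :
    (e ^ 2 - f ^ 2) / (e ^ 2 * (1 - f ^ 2)) = (1 + √(1 - e ^ 2))⁻¹ ↔
      e ^ 2 + f ^ 4 - 2 * f ^ 2 = 0 := by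
  set e' := √(1 - e ^ 2) with he'
  have he'0 : 0 < e' := sqrt_pos.2 (by nlinarith)
  have he'2 : e' ^ 2 = 1 - e ^ 2 := sq_sqrt (by nlinarith)
  have hden : e ^ 2 * (1 - f ^ 2) ≠ 0 := by nlinarith
  calc (e ^ 2 - f ^ 2) / (e ^ 2 * (1 - f ^ 2)) = (1 + e')⁻¹
      ↔ e' * (e ^ 2 - f ^ 2 - f ^ 2 * e') = 0 := by
        rw [div_eq_iff hden, eq_inv_mul_iff_mul_eq₀ (by linarith)]
        exact ⟨fun h => by linear_combination h - f ^ 2 * he'2,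
          fun h => by linear_combination h + f ^ 2 * he'2⟩
    _ ↔ e ^ 2 - f ^ 2 - f ^ 2 * e' = 0 := mul_eq_zero.trans (or_iff_right he'0.ne')
    _ ↔ (1 + e') * (1 - f ^ 2 - e') = 0 :=
        ⟨fun h => by linear_combination h - he'2, fun h => by linear_combination h + he'2⟩
    _ ↔ e' = 1 - f ^ 2 := by
        rw [mul_eq_zero, or_iff_right (by linarith)]
        constructor <;> intro h <;> linarith
    _ ↔ e ^ 2 + f ^ 4 - 2 * f ^ 2 = 0 := by
        constructor
        · intro h
          linear_combination -(e' + 1 - f ^ 2) * h + he'2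
        · intro h
          rw [he', show 1 - e ^ 2 = (1 - f ^ 2) ^ 2 by linear_combination -h,
            sqrt_sq (by nlinarith)]

lemma omegaHat_eq_arcsin_iff (hf : 0 < f) (hfe : f < e) (he : e < 1) :
    omegaHat e f = arcsin (1 / √(1 + √(1 - e ^ 2))) ↔ e ^ 2 + f ^ 4 - 2 * f ^ 2 = 0 := by
  have hf2 : 0 < f ^ 2 := by positivity
  have hfe2 : f ^ 2 < e ^ 2 := by nlinarith
  have he2 : e ^ 2 < 1 := by nlinarith
  have hden : 0 < e ^ 2 * (1 - f ^ 2) := mul_pos (by nlinarith) (by linarith)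
  have hA0 : 0 ≤ (e ^ 2 - f ^ 2) / (e ^ 2 * (1 - f ^ 2)) := div_nonneg (by linarith) hden.le
  have hA1 : (e ^ 2 - f ^ 2) / (e ^ 2 * (1 - f ^ 2)) ≤ 1 := by
    rw [div_le_one hden]
    nlinarith
  have hB1 : (1 + √(1 - e ^ 2))⁻¹ ≤ 1 :=
    inv_le_one_of_one_le₀ (by linarith [sqrt_nonneg (1 - e ^ 2)])
  have hneg (x : ℝ) : -1 ≤ √x := by linarith [sqrt_nonneg x]
  rw [omegaHat, one_div, ← sqrt_inv,
    arcsin_inj (hneg _) (sqrt_le_one.2 hA1) (hneg _) (sqrt_le_one.2 hB1),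
    sqrt_inj hA0 (by positivity), sq_sub_sq_div_eq_inv_iff hf hfe he]

end

/-- on `Δ`, `ρ̂(e,f) = 1/4` iff `e² + f⁴ − 2f² = 0`; in particular,
with `e' = √(1−e²)`, one has `F(arcsin(1/√(1+e')), e) = K(e)/2`. -/
theorem period_four_porism :
    (∀ e f : ℝ, 0 < f → f < e → e < 1 →
      (rhoHat e f = 1 / 4 ↔ e ^ 2 + f ^ 4 - 2 * f ^ 2 = 0)) ∧
    (∀ e : ℝ, 0 < e → e < 1 →
      ellF (Real.arcsin (1 / Real.sqrt (1 + Real.sqrt (1 - e ^ 2)))) e =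
        ellK e / 2) := by
  refine ⟨fun e f hf hfe he => ?_, fun e he0 he1 => ellF_arcsin_one_div_sqrt (by nlinarith)⟩
  have he2 : e ^ 2 < 1 := by nlinarith
  rw [rhoHat_eq_one_fourth_iff he2, ← ellF_arcsin_one_div_sqrt he2,
    (ellF_strictMono he2).injective.eq_iff, omegaHat_eq_arcsin_iff hf hfe he]
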